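/- Let d be a metric on (ℝ²_≤ ∖ Δ) ∪ {Δ}. Let α^(1), …, α^(N) and β^(1), …, β^(N) be finite signed persistence diagrams such that α := ∑_{k=1}^N α^(k) and β := ∑_{k=1}^N β^(k) are nonnegative (i.e. are finite persistence diagrams). Then W₁^d(α, β) ≤ ∑_{k=1}^N W₁^d(α^(k), β^(k)). In particular this applies when the α^(k), β^(k) are the graded persistence diagrams of α and β obtained by Möbius inversion of the graded rank functions. -/

import Mathlib

open scoped Classical ENNReal
open MeasureTheory Filter

noncomputable section

/-- Off-diagonal points of `ℝ²_≤`. -/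
abbrev Pt : Type := {p : ℝ × ℝ // p.1 < p.2}

/-- The quotient `(ℝ²_≤ ∖ Δ) ∪ {Δ}`: the diagonal is collapsed to the single
point `none`. -/
abbrev PtD : Type := Option Pt

/-- The rank "distance" formula on `ℝ²_≤`. -/
def drk (x y : ℝ × ℝ) : ℝ :=
  (x.2 - x.1) ^ 2 / 2 + (y.2 - y.1) ^ 2 / 2 - (max (min x.2 y.2 - max x.1 y.1) 0) ^ 2

/-- The dimension "distance" formula on `ℝ²_≤` (length of the symmetric
difference of the intervals `[x₁,x₂]` and `[y₁,y₂]`). -/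
def ddim (x y : ℝ × ℝ) : ℝ :=
  (x.2 - x.1) + (y.2 - y.1) - 2 * max (min x.2 y.2 - max x.1 y.1) 0

/-- `d_rk` on the quotient `(ℝ²_≤ ∖ Δ) ∪ {Δ}`, with `d_rk(x,Δ) = ½(x₂−x₁)²`. -/
def drkQ : PtD → PtD → ℝ
  | Option.some x, Option.some y => drk x.1 y.1
  | Option.some x, Option.none => (x.1.2 - x.1.1) ^ 2 / 2
  | Option.none, Option.some y => (y.1.2 - y.1.1) ^ 2 / 2
  | Option.none, Option.none => 0

/-- `d_dim` on the quotient `(ℝ²_≤ ∖ Δ) ∪ {Δ}`, with `d_dim(x,Δ) = x₂−x₁`. -/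
def ddimQ : PtD → PtD → ℝ
  | Option.some x, Option.some y => ddim x.1 y.1
  | Option.some x, Option.none => x.1.2 - x.1.1
  | Option.none, Option.some y => y.1.2 - y.1.1
  | Option.none, Option.none => 0

/-- The cost of the coupling between finite diagrams `α` and `β` determined by
the multiset `m` of matched pairs: matched pairs pay `d` between themselves,
and every unmatched point of `α` or `β` is matched with the diagonal `Δ`. -/
def cost (d : PtD → PtD → ℝ) (α β : Multiset Pt) (m : Multiset (Pt × Pt)) : ℝ :=
  (m.map fun p => d (some p.1) (some p.2)).sum
    + ((α - m.map Prod.fst).map fun x => d (some x) none).sum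
    + ((β - m.map Prod.snd).map fun y => d none (some y)).sum

/-- The 1-Wasserstein distance between finite persistence diagrams with ground
metric `d`: the infimum of the costs of all couplings. -/
def W1fin (d : PtD → PtD → ℝ) (α β : Multiset Pt) : ℝ :=
  sInf {c : ℝ | ∃ m : Multiset (Pt × Pt),
    m.map Prod.fst ≤ α ∧ m.map Prod.snd ≤ β ∧ c = cost d α β m}

/-- The tent function `tent_x(t) = max(0, min(t−x₁, x₂−t))`. -/
def tent (x : Pt) (t : ℝ) : ℝ := max 0 (min (t - x.1.1) (x.1.2 - t))

/-- The persistence landscape `λ_α(k,t)`: the `k`-th largest element of the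
multiset `{tent_x(t) : x ∈ α}` (and `0` if `α` has fewer than `k` elements). -/
def landscape (α : Multiset Pt) (k : ℕ) (t : ℝ) : ℝ :=
  sSup {h : ℝ | 0 < h ∧ k ≤ Multiset.card (α.filter fun x => h ≤ tent x t)}

/-- `‖Λα − Λβ‖₁ = ∑_{k ≥ 1} ∫ |λ_α(k,t) − λ_β(k,t)| dt`. -/
def lambdaDistFin (α β : Multiset Pt) : ℝ :=
  ∑' k : ℕ, ∫ t : ℝ, |landscape α (k + 1) t - landscape β (k + 1) t|

/-- The finite persistence diagram (multiset) underlying the positive part of a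
finite signed persistence diagram `σ : Pt →₀ ℤ`: the point `p` occurs with
multiplicity `max(σ(p), 0)`. -/
def posMult (σ : Pt →₀ ℤ) : Multiset Pt :=
  Finsupp.toMultiset (σ.mapRange Int.toNat Int.toNat_zero)

/-- The 1-Wasserstein distance between finite signed persistence diagrams:
`W₁^d(σ, τ) := W₁^d(σ₊ + τ₋, τ₊ + σ₋)`. -/
def W1signed (d : PtD → PtD → ℝ) (σ τ : Pt →₀ ℤ) : ℝ :=
  W1fin d (posMult σ + posMult (-τ)) (posMult τ + posMult (-σ))

/-! A coupling of `α` and `β` can be recorded as a transport plan: a multiset of pairs in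
`(ℝ²_≤ ∖ Δ) ∪ {Δ}` whose marginals off `Δ` are `α` and `β`. Since there are finitely many
couplings, optimal plans exist, and concatenating optimal plans shows that `W₁` is subadditive
under sums of diagrams. Removing a common point `x` from both diagrams cannot increase `W₁`:
an optimal plan carrying `u ↦ x` and `x ↦ v` is rerouted to `u ↦ v`, which is no more expensive
by the triangle inequality. With `γ = ∑ₖ (α⁽ᵏ⁾₋ + β⁽ᵏ⁾₋)` we have
`α + γ = ∑ₖ (α⁽ᵏ⁾₊ + β⁽ᵏ⁾₋)` and `β + γ = ∑ₖ (β⁽ᵏ⁾₊ + α⁽ᵏ⁾₋)`, hence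
`W₁(α, β) ≤ W₁(α + γ, β + γ) ≤ ∑ₖ W₁(α⁽ᵏ⁾, β⁽ᵏ⁾)`. -/

theorem Multiset.le_product_of_map_le {α β : Type*} {s : Multiset α} {t : Multiset β}
    {m : Multiset (α × β)} (hs : m.map Prod.fst ≤ s) (ht : m.map Prod.snd ≤ t) :
    m ≤ s ×ˢ t := by
  induction m using Multiset.induction_on generalizing s t with
  | empty => exact Multiset.zero_le _
  | cons p m ih =>
    obtain ⟨a, b⟩ := p
    rw [Multiset.map_cons] at hs ht
    obtain ⟨s', rfl⟩ :=
      Multiset.exists_cons_of_mem (Multiset.mem_of_le hs (Multiset.mem_cons_self a _))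
    obtain ⟨t', rfl⟩ :=
      Multiset.exists_cons_of_mem (Multiset.mem_of_le ht (Multiset.mem_cons_self b _))
    have hm : m ≤ s' ×ˢ t' :=
      ih ((Multiset.cons_le_cons_iff a).1 hs) ((Multiset.cons_le_cons_iff b).1 ht)
    rw [Multiset.cons_product, Multiset.product_cons, Multiset.map_cons, Multiset.cons_add]
    exact Multiset.cons_le_cons _
      (hm.trans ((Multiset.le_add_left _ _).trans (Multiset.le_add_left _ _)))

/-- `filterMap` discards `Δ = none`, so only the off-diagonal marginals are prescribed. -/
def IsPlan (α β : Multiset Pt) (π : Multiset (PtD × PtD)) : Prop :=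
  π.filterMap Prod.fst = α ∧ π.filterMap Prod.snd = β

def planCost (d : PtD → PtD → ℝ) (π : Multiset (PtD × PtD)) : ℝ :=
  (π.map fun p => d p.1 p.2).sum

def couplingPlan (α β : Multiset Pt) (m : Multiset (Pt × Pt)) : Multiset (PtD × PtD) :=
  m.map (fun p => (some p.1, some p.2))
    + (α - m.map Prod.fst).map (fun x => (some x, none))
    + (β - m.map Prod.snd).map (fun y => (none, some y))

section Wasserstein

variable {d : PtD → PtD → ℝ}

theorem self_nonneg_of_triangle (hdtri : ∀ u v w : PtD, d u w ≤ d u v + d v w) (u : PtD) :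
    0 ≤ d u u := by
  linarith [hdtri u u u]

variable (d) in
theorem finite_costs (α β : Multiset Pt) :
    {c : ℝ | ∃ m : Multiset (Pt × Pt),
      m.map Prod.fst ≤ α ∧ m.map Prod.snd ≤ β ∧ c = cost d α β m}.Finite := by
  refine ((Set.finite_Iic (α ×ˢ β)).image (cost d α β)).subset ?_
  rintro _ ⟨m, h1, h2, rfl⟩
  exact ⟨m, Multiset.le_product_of_map_le h1 h2, rfl⟩

theorem W1fin_le_cost {α β : Multiset Pt} {m : Multiset (Pt × Pt)}
    (h1 : m.map Prod.fst ≤ α) (h2 : m.map Prod.snd ≤ β) : W1fin d α β ≤ cost d α β m :=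
  csInf_le (finite_costs d α β).bddBelow ⟨m, h1, h2, rfl⟩

variable (d) in
theorem exists_cost_eq_W1fin (α β : Multiset Pt) :
    ∃ m : Multiset (Pt × Pt), m.map Prod.fst ≤ α ∧ m.map Prod.snd ≤ β ∧
      cost d α β m = W1fin d α β := by
  have hmem := Set.Nonempty.csInf_mem ?_ (finite_costs d α β)
  · obtain ⟨m, h1, h2, h⟩ := hmem
    exact ⟨m, h1, h2, h.symm⟩
  · exact ⟨cost d α β 0, 0, by simp, by simp, rfl⟩

theorem cost_add {α₁ α₂ β₁ β₂ : Multiset Pt} {m₁ m₂ : Multiset (Pt × Pt)}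
    (hα₁ : m₁.map Prod.fst ≤ α₁) (hβ₁ : m₁.map Prod.snd ≤ β₁)
    (hα₂ : m₂.map Prod.fst ≤ α₂) (hβ₂ : m₂.map Prod.snd ≤ β₂) :
    cost d (α₁ + α₂) (β₁ + β₂) (m₁ + m₂) = cost d α₁ β₁ m₁ + cost d α₂ β₂ m₂ := by
  simp only [cost, Multiset.map_add, ← tsub_add_tsub_comm hα₁ hα₂,
    ← tsub_add_tsub_comm hβ₁ hβ₂, Multiset.sum_add]
  ring

theorem IsPlan.add {α₁ α₂ β₁ β₂ : Multiset Pt} {π₁ π₂ : Multiset (PtD × PtD)}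
    (h₁ : IsPlan α₁ β₁ π₁) (h₂ : IsPlan α₂ β₂ π₂) : IsPlan (α₁ + α₂) (β₁ + β₂) (π₁ + π₂) := by
  simp only [IsPlan, Multiset.filterMap_add, h₁.1, h₁.2, h₂.1, h₂.2, and_self]

theorem planCost_add (π₁ π₂ : Multiset (PtD × PtD)) :
    planCost d (π₁ + π₂) = planCost d π₁ + planCost d π₂ := by
  simp only [planCost, Multiset.map_add, Multiset.sum_add]

theorem isPlan_couplingPlan {α β : Multiset Pt} {m : Multiset (Pt × Pt)}
    (h1 : m.map Prod.fst ≤ α) (h2 : m.map Prod.snd ≤ β) : IsPlan α β (couplingPlan α β m) := by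
  have hnone (s : Multiset Pt) : s.filterMap (fun _ => (none : PtD)) = 0 :=
    Multiset.eq_zero_of_forall_notMem (by simp [Multiset.mem_filterMap])
  simp only [IsPlan, couplingPlan, Multiset.filterMap_add, Multiset.filterMap_map,
    Function.comp_def, Multiset.filterMap_some, hnone]
  simp only [← Function.comp_def some, Multiset.filterMap_eq_map, add_zero,
    add_tsub_cancel_of_le h1, add_tsub_cancel_of_le h2, and_self]

theorem planCost_couplingPlan (α β : Multiset Pt) (m : Multiset (Pt × Pt)) :
    planCost d (couplingPlan α β m) = cost d α β m := by
  simp [planCost, couplingPlan, cost, Multiset.map_map]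

variable (d) in
theorem exists_isPlan_planCost_eq_W1fin (α β : Multiset Pt) :
    ∃ π, IsPlan α β π ∧ planCost d π = W1fin d α β := by
  obtain ⟨m, h1, h2, hm⟩ := exists_cost_eq_W1fin d α β
  exact ⟨couplingPlan α β m, isPlan_couplingPlan h1 h2, (planCost_couplingPlan α β m).trans hm⟩

theorem exists_cost_le_planCost_singleton (hdtri : ∀ u v w : PtD, d u w ≤ d u v + d v w)
    (p : PtD × PtD) :
    ∃ m : Multiset (Pt × Pt), m.map Prod.fst ≤ ({p} : Multiset _).filterMap Prod.fst ∧
      m.map Prod.snd ≤ ({p} : Multiset _).filterMap Prod.snd ∧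
      cost d (({p} : Multiset _).filterMap Prod.fst) (({p} : Multiset _).filterMap Prod.snd) m
        ≤ planCost d {p} := by
  obtain ⟨_ | x, _ | y⟩ := p
  · exact ⟨0, by simp, by simp,
      by simp [cost, planCost, ← Multiset.cons_zero, self_nonneg_of_triangle hdtri]⟩
  · exact ⟨0, by simp, by simp, by simp [cost, planCost, ← Multiset.cons_zero]⟩
  · exact ⟨0, by simp, by simp, by simp [cost, planCost, ← Multiset.cons_zero]⟩
  · exact ⟨{(x, y)}, by simp, by simp, by simp [cost, planCost, ← Multiset.cons_zero]⟩

theorem exists_cost_le_planCost (hdtri : ∀ u v w : PtD, d u w ≤ d u v + d v w)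
    (π : Multiset (PtD × PtD)) :
    ∃ m : Multiset (Pt × Pt), m.map Prod.fst ≤ π.filterMap Prod.fst ∧
      m.map Prod.snd ≤ π.filterMap Prod.snd ∧
      cost d (π.filterMap Prod.fst) (π.filterMap Prod.snd) m ≤ planCost d π := by
  induction π using Multiset.induction_on with
  | empty => exact ⟨0, by simp, by simp, by simp [cost, planCost]⟩
  | cons p π ih =>
    obtain ⟨m, h1, h2, hm⟩ := ih
    obtain ⟨mp, hp1, hp2, hmp⟩ := exists_cost_le_planCost_singleton hdtri p
    refine ⟨mp + m, ?_, ?_, ?_⟩ <;>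
      simp only [Multiset.map_add, ← Multiset.singleton_add, Multiset.filterMap_add]
    · exact add_le_add hp1 h1
    · exact add_le_add hp2 h2
    · rw [cost_add hp1 hp2 h1 h2, planCost_add]
      exact add_le_add hmp hm

theorem W1fin_le_planCost (hdtri : ∀ u v w : PtD, d u w ≤ d u v + d v w)
    {α β : Multiset Pt} {π : Multiset (PtD × PtD)} (hπ : IsPlan α β π) :
    W1fin d α β ≤ planCost d π := by
  obtain ⟨m, h1, h2, hm⟩ := exists_cost_le_planCost hdtri π
  rw [hπ.1, hπ.2] at *
  exact (W1fin_le_cost h1 h2).trans hm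

theorem W1fin_add_le (hdtri : ∀ u v w : PtD, d u w ≤ d u v + d v w)
    (α₁ α₂ β₁ β₂ : Multiset Pt) :
    W1fin d (α₁ + α₂) (β₁ + β₂) ≤ W1fin d α₁ β₁ + W1fin d α₂ β₂ := by
  obtain ⟨π₁, hπ₁, hc₁⟩ := exists_isPlan_planCost_eq_W1fin d α₁ β₁
  obtain ⟨π₂, hπ₂, hc₂⟩ := exists_isPlan_planCost_eq_W1fin d α₂ β₂
  calc W1fin d (α₁ + α₂) (β₁ + β₂)
      ≤ planCost d (π₁ + π₂) := W1fin_le_planCost hdtri (hπ₁.add hπ₂)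
    _ = W1fin d α₁ β₁ + W1fin d α₂ β₂ := by rw [planCost_add, hc₁, hc₂]

theorem W1fin_sum_le {ι : Type*} (hdtri : ∀ u v w : PtD, d u w ≤ d u v + d v w)
    (s : Finset ι) (α β : ι → Multiset Pt) :
    W1fin d (∑ i ∈ s, α i) (∑ i ∈ s, β i) ≤ ∑ i ∈ s, W1fin d (α i) (β i) := by
  classical
  induction s using Finset.induction_on with
  | empty => simpa [planCost] using W1fin_le_planCost (d := d) hdtri (π := 0) (by simp [IsPlan])
  | insert i s hi ih =>
    simp only [Finset.sum_insert hi]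
    exact (W1fin_add_le hdtri _ _ _ _).trans (add_le_add le_rfl ih)

theorem exists_isPlan_planCost_le_of_isPlan_cons (hdtri : ∀ u v w : PtD, d u w ≤ d u v + d v w)
    {α β : Multiset Pt} {x : Pt} {π : Multiset (PtD × PtD)} (hπ : IsPlan (x ::ₘ α) (x ::ₘ β) π) :
    ∃ π', IsPlan α β π' ∧ planCost d π' ≤ planCost d π := by
  obtain ⟨hfst, hsnd⟩ := hπ
  obtain ⟨⟨_, v⟩, hp, rfl : _ = some x⟩ :=
    (Multiset.mem_filterMap _ _).1 (hfst ▸ Multiset.mem_cons_self x α)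
  obtain ⟨ρ, rfl⟩ := Multiset.exists_cons_of_mem hp
  rw [Multiset.filterMap_cons_some Prod.fst _ _ rfl, Multiset.cons_inj_right] at hfst
  by_cases hv : v = some x
  · subst hv
    rw [Multiset.filterMap_cons_some Prod.snd _ _ rfl, Multiset.cons_inj_right] at hsnd
    refine ⟨ρ, ⟨hfst, hsnd⟩, ?_⟩
    simp [planCost, self_nonneg_of_triangle hdtri]
  obtain ⟨⟨u, _⟩, hq, rfl : _ = some x⟩ : ∃ q ∈ ρ, q.2 = some x := by
    obtain ⟨q, hq, hqx⟩ := (Multiset.mem_filterMap _ _).1 (hsnd ▸ Multiset.mem_cons_self x β)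
    rcases Multiset.mem_cons.1 hq with rfl | hq
    · exact absurd hqx hv
    · exact ⟨q, hq, hqx⟩
  obtain ⟨σ, rfl⟩ := Multiset.exists_cons_of_mem hq
  rw [Multiset.cons_swap, Multiset.filterMap_cons_some Prod.snd _ _ rfl,
    Multiset.cons_inj_right] at hsnd
  refine ⟨(u, v) ::ₘ σ, ⟨?_, ?_⟩, ?_⟩
  · rw [← hfst]
    simp [Multiset.filterMap_cons]
  · rw [← hsnd]
    simp [Multiset.filterMap_cons]
  · simp only [planCost, Multiset.map_cons, Multiset.sum_cons]
    linarith [hdtri u (some x) v]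

theorem W1fin_le_cons (hdtri : ∀ u v w : PtD, d u w ≤ d u v + d v w)
    (α β : Multiset Pt) (x : Pt) : W1fin d α β ≤ W1fin d (x ::ₘ α) (x ::ₘ β) := by
  obtain ⟨π, hπ, hπW⟩ := exists_isPlan_planCost_eq_W1fin d (x ::ₘ α) (x ::ₘ β)
  obtain ⟨π', hπ', hle⟩ := exists_isPlan_planCost_le_of_isPlan_cons hdtri hπ
  exact (W1fin_le_planCost hdtri hπ').trans (hle.trans hπW.le)

theorem W1fin_le_add_add (hdtri : ∀ u v w : PtD, d u w ≤ d u v + d v w)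
    (α β γ : Multiset Pt) : W1fin d α β ≤ W1fin d (α + γ) (β + γ) := by
  induction γ using Multiset.induction_on with
  | empty => simp
  | cons x γ ih =>
    rw [Multiset.add_cons, Multiset.add_cons]
    exact ih.trans (W1fin_le_cons hdtri _ _ x)

end Wasserstein
theorem count_posMult (σ : Pt →₀ ℤ) (p : Pt) : (posMult σ).count p = (σ p).toNat := by
  rw [posMult, Finsupp.count_toMultiset, Finsupp.mapRange_apply]

theorem posMult_sum_add_sum_posMult_neg {ι : Type*} (s : Finset ι) (f : ι → Pt →₀ ℤ)
    (hf : ∀ p, 0 ≤ (∑ i ∈ s, f i) p) :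
    posMult (∑ i ∈ s, f i) + ∑ i ∈ s, posMult (-f i) = ∑ i ∈ s, posMult (f i) := by
  ext p
  have hsum : (∑ i ∈ s, f i) p = ∑ i ∈ s, f i p := Finsupp.finsetSum_apply _ _ _
  simp only [Multiset.count_add, Multiset.count_sum', count_posMult, Finsupp.neg_apply, hsum]
  zify
  rw [Int.toNat_of_nonneg (hsum ▸ hf p), ← Finset.sum_add_distrib]
  refine Finset.sum_congr rfl fun i _ => ?_
  omega

theorem stmt17_general (d : PtD → PtD → ℝ)
    (hdtri : ∀ u v w : PtD, d u w ≤ d u v + d v w)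
    (N : ℕ) (A B : Fin N → (Pt →₀ ℤ))
    (hA : ∀ p : Pt, 0 ≤ (∑ k, A k) p) (hB : ∀ p : Pt, 0 ≤ (∑ k, B k) p) :
    W1fin d (posMult (∑ k, A k)) (posMult (∑ k, B k)) ≤
      ∑ k, W1signed d (A k) (B k) := by
  set negA := ∑ k, posMult (-A k)
  set negB := ∑ k, posMult (-B k)
  calc W1fin d (posMult (∑ k, A k)) (posMult (∑ k, B k))
      ≤ W1fin d (posMult (∑ k, A k) + (negA + negB)) (posMult (∑ k, B k) + (negA + negB)) :=
        W1fin_le_add_add hdtri _ _ _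
    _ = W1fin d (∑ k, (posMult (A k) + posMult (-B k)))
          (∑ k, (posMult (B k) + posMult (-A k))) := by
        rw [Finset.sum_add_distrib, Finset.sum_add_distrib,
          ← posMult_sum_add_sum_posMult_neg _ _ hA, ← posMult_sum_add_sum_posMult_neg _ _ hB]
        congr 1 <;> abel
    _ ≤ ∑ k, W1signed d (A k) (B k) := W1fin_sum_le hdtri _ _ _

/-- If the finite signed diagrams `α⁽¹⁾,…,α⁽ᴺ⁾` and `β⁽¹⁾,…,β⁽ᴺ⁾` sum to
nonnegative (i.e. honest) persistence diagrams `α` and `β`, then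
`W₁^d(α, β) ≤ ∑_k W₁^d(α⁽ᵏ⁾, β⁽ᵏ⁾)`. -/
theorem stmt17 (d : PtD → PtD → ℝ)
    (hd0 : ∀ u v : PtD, 0 ≤ d u v)
    (hdsymm : ∀ u v : PtD, d u v = d v u)
    (hdeq : ∀ u v : PtD, d u v = 0 ↔ u = v)
    (hdtri : ∀ u v w : PtD, d u w ≤ d u v + d v w)
    (N : ℕ) (A B : Fin N → (Pt →₀ ℤ))
    (hA : ∀ p : Pt, 0 ≤ (∑ k, A k) p) (hB : ∀ p : Pt, 0 ≤ (∑ k, B k) p) :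
    W1fin d (posMult (∑ k, A k)) (posMult (∑ k, B k)) ≤
      ∑ k, W1signed d (A k) (B k) :=
  stmt17_general d hdtri N A B hA hB
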